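/- arXiv:2311.05822 — 2 statements merged into one kernel-verified Lean document; each statement's English description precedes it below -/
import Mathlib

section
/- Fix an integer N ≥ 1, a probability vector π ∈ ℝ^N (π_{n'} ≥ 0, Σ_{n'} π_{n'} = 1), positive reals a_1,…,a_N, parameters β ∈ (0,1), τ_C ≥ 0, γ > 0, s > 0, υ ∈ (0,1), R > 0 and r_1,…,r_N > −1. Define g(θ) = Σ_{n'} π_{n'} ν_γ(a_{n'} R_{n'}(θ)) for θ ∈ [0,1], let θ* ∈ [0,1] be a maximizer of g over [0,1], and set κ = ν_γ^{-1}(g(θ*)). Then for every c ∈ (0, s/(1+τ_C)) and every θ ∈ [0,1], exp((1−β)·log c + β·log ν_γ^{-1}(Σ_{n'} π_{n'} ν_γ(a_{n'} R_{n'}(θ)(s−(1+τ_C)c)))) ≤ ((1−β)/(1+τ_C))^{1−β} (βκ)^β s, and equality holds at c = (1−β)s/(1+τ_C) and θ = θ*. -/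
/-!
The Box–Cox certainty equivalent is positively homogeneous, so with savings
`w = s - (1 + τ_C) c` and allocation `θ` the continuation value is `w · CE(θ) ≤ w κ`. The
objective is therefore bounded by the Cobb–Douglas function `c ^ (1 - β) (κ w) ^ β` on the budget
line `(1 + τ_C) c + w = s`, whose maximum, attained at `c = (1 - β) s / (1 + τ_C)`, follows from
the weighted AM–GM inequality.
-/

/-- The Box–Cox transformation `ν_γ` on `(0,∞)`. -/
noncomputable def boxCox (γ c : ℝ) : ℝ :=
  if γ = 1 then Real.log c else (c ^ (1 - γ) - 1) / (1 - γ)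

/-- The inverse of the Box–Cox transformation `ν_γ` (on its range). -/
noncomputable def boxCoxInv (γ y : ℝ) : ℝ :=
  if γ = 1 then Real.exp y else (1 + (1 - γ) * y) ^ (1 / (1 - γ))

open Finset Real

section BoxCox

variable {γ : ℝ}

lemma one_add_mul_boxCox_pos {c : ℝ} (hc : 0 < c) : 0 < 1 + (1 - γ) * boxCox γ c := by
  by_cases h1 : γ = 1
  · simp [h1]
  · have h0 : 1 - γ ≠ 0 := sub_ne_zero.mpr (Ne.symm h1)
    rw [boxCox, if_neg h1, mul_div_cancel₀ _ h0, add_sub_cancel]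
    exact rpow_pos_of_pos hc _

lemma boxCox_mul {c w : ℝ} (hc : 0 < c) (hw : 0 < w) :
    boxCox γ (c * w) = w ^ (1 - γ) * boxCox γ c + boxCox γ w := by
  by_cases h1 : γ = 1
  · simp [boxCox, h1, log_mul hc.ne' hw.ne']
  · have h0 : 1 - γ ≠ 0 := sub_ne_zero.mpr (Ne.symm h1)
    simp only [boxCox, if_neg h1, mul_rpow hc.le hw.le]
    field_simp
    ring

lemma boxCoxInv_pos {y : ℝ} (hy : 0 < 1 + (1 - γ) * y) : 0 < boxCoxInv γ y := by
  unfold boxCoxInv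
  split_ifs
  · exact exp_pos y
  · exact rpow_pos_of_pos hy _

lemma boxCoxInv_le_boxCoxInv {x y : ℝ} (hx : 0 < 1 + (1 - γ) * x) (hy : 0 < 1 + (1 - γ) * y)
    (hxy : x ≤ y) : boxCoxInv γ x ≤ boxCoxInv γ y := by
  unfold boxCoxInv
  split_ifs with h1
  · exact exp_le_exp.mpr hxy
  rcases lt_or_gt_of_ne (sub_ne_zero.mpr (Ne.symm h1)) with hneg | hpos
  · exact rpow_le_rpow_of_nonpos hy (by nlinarith) (one_div_neg.mpr hneg).le
  · exact rpow_le_rpow hx.le (by nlinarith) (one_div_pos.mpr hpos).le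

lemma boxCoxInv_rpow_mul_add_boxCox {w y : ℝ} (hw : 0 < w) (hy : 0 ≤ 1 + (1 - γ) * y) :
    boxCoxInv γ (w ^ (1 - γ) * y + boxCox γ w) = w * boxCoxInv γ y := by
  unfold boxCoxInv boxCox
  split_ifs with h1
  · simp [h1, exp_add, exp_log hw, mul_comm]
  · have h0 : 1 - γ ≠ 0 := sub_ne_zero.mpr (Ne.symm h1)
    have hw' : 0 ≤ w ^ (1 - γ) := rpow_nonneg hw.le _
    have key : 1 + (1 - γ) * (w ^ (1 - γ) * y + (w ^ (1 - γ) - 1) / (1 - γ))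
        = w ^ (1 - γ) * (1 + (1 - γ) * y) := by
      field_simp
      ring
    rw [key, mul_rpow hw' hy, ← rpow_mul hw.le, mul_one_div_cancel h0, rpow_one]

end BoxCox

lemma sum_mul_pos_of_sum_eq_one {ι : Type*} [Fintype ι] {p x : ι → ℝ} (hp : ∀ i, 0 ≤ p i)
    (hp1 : ∑ i, p i = 1) (hx : ∀ i, 0 < x i) : 0 < ∑ i, p i * x i := by
  obtain ⟨i, -, hi⟩ : ∃ i ∈ univ, (0 : ℝ) < p i :=
    exists_lt_of_sum_lt (by simp [hp1])
  exact sum_pos' (fun j _ => mul_nonneg (hp j) (hx j).le) ⟨i, mem_univ i, mul_pos hi (hx i)⟩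

noncomputable def certaintyEquiv {ι : Type*} [Fintype ι] (p : ι → ℝ) (γ : ℝ) (x : ι → ℝ) : ℝ :=
  boxCoxInv γ (∑ i, p i * boxCox γ (x i))

section CertaintyEquiv

variable {ι : Type*} [Fintype ι] {p : ι → ℝ} {γ : ℝ} {x y : ι → ℝ}

lemma one_add_mul_sum_boxCox_pos (hp : ∀ i, 0 ≤ p i) (hp1 : ∑ i, p i = 1) (hx : ∀ i, 0 < x i) :
    0 < 1 + (1 - γ) * ∑ i, p i * boxCox γ (x i) := by
  have h : 1 + (1 - γ) * ∑ i, p i * boxCox γ (x i)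
      = ∑ i, p i * (1 + (1 - γ) * boxCox γ (x i)) := by
    simp only [mul_add, mul_one, sum_add_distrib, hp1, mul_sum]
    ring_nf
  rw [h]
  exact sum_mul_pos_of_sum_eq_one hp hp1 fun i => one_add_mul_boxCox_pos (hx i)

lemma certaintyEquiv_pos (hp : ∀ i, 0 ≤ p i) (hp1 : ∑ i, p i = 1) (hx : ∀ i, 0 < x i) :
    0 < certaintyEquiv p γ x :=
  boxCoxInv_pos (one_add_mul_sum_boxCox_pos hp hp1 hx)

lemma certaintyEquiv_le_certaintyEquiv (hp : ∀ i, 0 ≤ p i) (hp1 : ∑ i, p i = 1)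
    (hx : ∀ i, 0 < x i) (hy : ∀ i, 0 < y i)
    (hxy : ∑ i, p i * boxCox γ (x i) ≤ ∑ i, p i * boxCox γ (y i)) :
    certaintyEquiv p γ x ≤ certaintyEquiv p γ y :=
  boxCoxInv_le_boxCoxInv (one_add_mul_sum_boxCox_pos hp hp1 hx)
    (one_add_mul_sum_boxCox_pos hp hp1 hy) hxy

lemma certaintyEquiv_mul_const (hp : ∀ i, 0 ≤ p i) (hp1 : ∑ i, p i = 1) (hx : ∀ i, 0 < x i)
    {w : ℝ} (hw : 0 < w) :
    certaintyEquiv p γ (fun i => x i * w) = w * certaintyEquiv p γ x := by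
  have h : ∑ i, p i * boxCox γ (x i * w)
      = w ^ (1 - γ) * ∑ i, p i * boxCox γ (x i) + boxCox γ w := by
    simp only [boxCox_mul (hx _) hw, mul_add, sum_add_distrib, ← sum_mul, hp1, one_mul, mul_sum]
    congr 1
    exact sum_congr rfl fun i _ => by ring
  rw [certaintyEquiv, h, boxCoxInv_rpow_mul_add_boxCox hw
    (one_add_mul_sum_boxCox_pos hp hp1 hx).le, certaintyEquiv]

end CertaintyEquiv

lemma mul_add_mul_one_sub_pos {x y θ : ℝ} (hx : 0 < x) (hy : 0 < y) (hθ : θ ∈ Set.Icc (0 : ℝ) 1) :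
    0 < x * θ + y * (1 - θ) := by
  simpa [smul_eq_mul, mul_comm] using
    convex_Ioi (0 : ℝ) hx hy hθ.1 (sub_nonneg.2 hθ.2) (add_sub_cancel θ 1)

lemma exp_mul_log_add_mul_log {x y : ℝ} (hx : 0 < x) (hy : 0 < y) (u v : ℝ) :
    exp (u * log x + v * log y) = x ^ u * y ^ v := by
  rw [exp_add, rpow_def_of_pos hx, rpow_def_of_pos hy, mul_comm u, mul_comm v]

section CobbDouglas

variable {β q κ s : ℝ}

lemma cobb_douglas_le {c w : ℝ} (hβ0 : 0 < β) (hβ1 : β < 1) (hq : 0 < q) (hκ : 0 < κ)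
    (hc : 0 ≤ c) (hw : 0 ≤ w) (hs : q * c + w ≤ s) :
    c ^ (1 - β) * (w * κ) ^ β ≤ ((1 - β) / q) ^ (1 - β) * (β * κ) ^ β * s := by
  have h1β : 0 < 1 - β := sub_pos.2 hβ1
  -- Weighted AM–GM for `A = q c / (1 - β)` and `B = w / β`, which coincide at the optimum.
  set A := q * c / (1 - β) with hA
  set B := w / β with hB
  have hcA : c = (1 - β) / q * A := by rw [hA]; field_simp
  have hwB : w * κ = β * κ * B := by rw [hB]; field_simp
  have hAB : (1 - β) * A + β * B = q * c + w := by rw [hA, hB]; field_simp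
  calc c ^ (1 - β) * (w * κ) ^ β
      = ((1 - β) / q) ^ (1 - β) * (β * κ) ^ β * (A ^ (1 - β) * B ^ β) := by
        rw [hcA, hwB, mul_rpow (by positivity) (by positivity),
          mul_rpow (by positivity) (by positivity)]
        ring
    _ ≤ ((1 - β) / q) ^ (1 - β) * (β * κ) ^ β * s := by
        gcongr
        calc A ^ (1 - β) * B ^ β ≤ (1 - β) * A + β * B :=
              geom_mean_le_arith_mean2_weighted h1β.le hβ0.le (by positivity) (by positivity)
                (sub_add_cancel 1 β)
          _ ≤ s := hAB ▸ hs

lemma cobb_douglas_optimum (hβ0 : 0 ≤ β) (hβ1 : β ≤ 1) (hq : 0 ≤ q) (hκ : 0 ≤ κ) (hs : 0 ≤ s) :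
    ((1 - β) * s / q) ^ (1 - β) * (β * s * κ) ^ β
      = ((1 - β) / q) ^ (1 - β) * (β * κ) ^ β * s := by
  have h1β : 0 ≤ (1 - β) / q := div_nonneg (sub_nonneg.2 hβ1) hq
  rw [mul_div_right_comm, mul_right_comm, mul_rpow h1β hs, mul_rpow (by positivity) hs,
    mul_mul_mul_comm, ← rpow_add' hs (by norm_num), sub_add_cancel, rpow_one]

end CobbDouglas

theorem stmt0_general (N : ℕ)
    (p : Fin N → ℝ) (hp : ∀ n, 0 ≤ p n) (hp1 : ∑ n, p n = 1)
    (a : Fin N → ℝ) (ha : ∀ n, 0 < a n)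
    (β : ℝ) (hβ : β ∈ Set.Ioo (0:ℝ) 1)
    (τC : ℝ) (hτC : 0 ≤ τC)
    (γ : ℝ)
    (s : ℝ) (hs : 0 < s)
    (υ : ℝ) (hυ : υ ∈ Set.Ioo (0:ℝ) 1)
    (R : ℝ) (hR : 0 < R)
    (r : Fin N → ℝ) (hr : ∀ n, -1 < r n)
    (Rn : Fin N → ℝ → ℝ)
    (hRn : ∀ n θ, Rn n θ = (1 / υ) * ((1 + r n) * θ + R * (1 - θ)))
    (g : ℝ → ℝ) (hg : ∀ θ, g θ = ∑ n, p n * boxCox γ (a n * Rn n θ))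
    (θstar : ℝ) (hθ1 : θstar ∈ Set.Icc (0:ℝ) 1)
    (hθmax : ∀ θ ∈ Set.Icc (0:ℝ) 1, g θ ≤ g θstar)
    (κ : ℝ) (hκ : κ = boxCoxInv γ (g θstar)) :
    (∀ c ∈ Set.Ioo 0 (s / (1 + τC)), ∀ θ ∈ Set.Icc (0:ℝ) 1,
      Real.exp ((1 - β) * Real.log c +
        β * Real.log (boxCoxInv γ
          (∑ n, p n * boxCox γ (a n * (Rn n θ * (s - (1 + τC) * c))))))
        ≤ ((1 - β) / (1 + τC)) ^ (1 - β) * (β * κ) ^ β * s) ∧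
    Real.exp ((1 - β) * Real.log ((1 - β) * s / (1 + τC)) +
        β * Real.log (boxCoxInv γ
          (∑ n, p n * boxCox γ (a n * (Rn n θstar *
            (s - (1 + τC) * ((1 - β) * s / (1 + τC))))))))
      = ((1 - β) / (1 + τC)) ^ (1 - β) * (β * κ) ^ β * s := by
  obtain ⟨hβ0, hβ1⟩ := hβ
  have hq : 0 < 1 + τC := by linarith
  set CE : ℝ → ℝ := fun θ => certaintyEquiv p γ fun n => a n * Rn n θ
  have hx : ∀ θ ∈ Set.Icc (0 : ℝ) 1, ∀ n, 0 < a n * Rn n θ := fun θ hθ n => by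
    rw [hRn]
    exact mul_pos (ha n) <| mul_pos (one_div_pos.2 hυ.1) <|
      mul_add_mul_one_sub_pos (by linarith [hr n]) hR hθ
  have hκ' : κ = CE θstar := by rw [hκ, hg]; rfl
  have hCE_pos : ∀ θ ∈ Set.Icc (0 : ℝ) 1, 0 < CE θ := fun θ hθ =>
    certaintyEquiv_pos hp hp1 (hx θ hθ)
  have hκ0 : 0 < κ := hκ' ▸ hCE_pos θstar hθ1
  have hCE_le : ∀ θ ∈ Set.Icc (0 : ℝ) 1, CE θ ≤ κ := fun θ hθ =>
    hκ' ▸ certaintyEquiv_le_certaintyEquiv hp hp1 (hx θ hθ) (hx θstar hθ1)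
      (by simpa only [hg] using hθmax θ hθ)
  have hvalue : ∀ θ ∈ Set.Icc (0 : ℝ) 1, ∀ c w, 0 < c → 0 < w →
      exp ((1 - β) * log c + β * log (boxCoxInv γ (∑ n, p n * boxCox γ (a n * (Rn n θ * w)))))
        = c ^ (1 - β) * (w * CE θ) ^ β := by
    intro θ hθ c w hc hw
    have hscale : boxCoxInv γ (∑ n, p n * boxCox γ (a n * (Rn n θ * w))) = w * CE θ := by
      simp_rw [← mul_assoc]
      exact certaintyEquiv_mul_const hp hp1 (hx θ hθ) hw
    rw [hscale, exp_mul_log_add_mul_log hc (mul_pos hw (hCE_pos θ hθ))]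
  refine ⟨fun c hc θ hθ => ?_, ?_⟩
  · have hw : 0 < s - (1 + τC) * c := by linarith [(lt_div_iff₀ hq).1 hc.2]
    rw [hvalue θ hθ c _ hc.1 hw]
    calc _ ≤ c ^ (1 - β) * ((s - (1 + τC) * c) * κ) ^ β :=
          mul_le_mul_of_nonneg_left (rpow_le_rpow (mul_pos hw (hCE_pos θ hθ)).le
            (mul_le_mul_of_nonneg_left (hCE_le θ hθ) hw.le) hβ0.le) (rpow_nonneg hc.1.le _)
      _ ≤ _ := cobb_douglas_le hβ0 hβ1 hq hκ0 hc.1.le hw.le (by linarith)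
  · have hw : s - (1 + τC) * ((1 - β) * s / (1 + τC)) = β * s := by
      field_simp
      ring
    have hc : 0 < (1 - β) * s / (1 + τC) := by have := sub_pos.2 hβ1; positivity
    rw [hw, hvalue θstar hθ1 _ _ hc (by positivity), ← hκ']
    exact cobb_douglas_optimum hβ0.le hβ1.le hq.le hκ0.le hs.le

/-- Lemma 1 of the paper: solution of the one-step Epstein–Zin
wealth-allocation maximization with linear candidate value function. -/
theorem stmt0 (N : ℕ) (hN : 1 ≤ N)
    (p : Fin N → ℝ) (hp : ∀ n, 0 ≤ p n) (hp1 : ∑ n, p n = 1)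
    (a : Fin N → ℝ) (ha : ∀ n, 0 < a n)
    (β : ℝ) (hβ : β ∈ Set.Ioo (0:ℝ) 1)
    (τC : ℝ) (hτC : 0 ≤ τC)
    (γ : ℝ) (hγ : 0 < γ)
    (s : ℝ) (hs : 0 < s)
    (υ : ℝ) (hυ : υ ∈ Set.Ioo (0:ℝ) 1)
    (R : ℝ) (hR : 0 < R)
    (r : Fin N → ℝ) (hr : ∀ n, -1 < r n)
    (Rn : Fin N → ℝ → ℝ)
    (hRn : ∀ n θ, Rn n θ = (1 / υ) * ((1 + r n) * θ + R * (1 - θ)))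
    (g : ℝ → ℝ) (hg : ∀ θ, g θ = ∑ n, p n * boxCox γ (a n * Rn n θ))
    (θstar : ℝ) (hθ1 : θstar ∈ Set.Icc (0:ℝ) 1)
    (hθmax : ∀ θ ∈ Set.Icc (0:ℝ) 1, g θ ≤ g θstar)
    (κ : ℝ) (hκ : κ = boxCoxInv γ (g θstar)) :
    (∀ c ∈ Set.Ioo 0 (s / (1 + τC)), ∀ θ ∈ Set.Icc (0:ℝ) 1,
      Real.exp ((1 - β) * Real.log c +
        β * Real.log (boxCoxInv γ
          (∑ n, p n * boxCox γ (a n * (Rn n θ * (s - (1 + τC) * c))))))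
        ≤ ((1 - β) / (1 + τC)) ^ (1 - β) * (β * κ) ^ β * s) ∧
    Real.exp ((1 - β) * Real.log ((1 - β) * s / (1 + τC)) +
        β * Real.log (boxCoxInv γ
          (∑ n, p n * boxCox γ (a n * (Rn n θstar *
            (s - (1 + τC) * ((1 - β) * s / (1 + τC))))))))
      = ((1 - β) / (1 + τC)) ^ (1 - β) * (β * κ) ^ β * s :=
  stmt0_general N p hp hp1 a ha β hβ τC hτC γ s hs υ hυ R hR r hr Rn hRn g hg θstar hθ1 hθmax κ hκ
end

section
/- Let N ≥ 1 and let c_{ij} ≥ 0 and g_{ij} > 0 for 1 ≤ i, j ≤ N. For real z let A(z) be the N×N matrix with (i,j)-entry c_{ij}·g_{ij}^z, and let ρ(A(z)) denote its spectral radius. Then the function z ↦ ρ(A(z)) is convex on ℝ. -/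
/-- The spectral radius of a square complex matrix: the maximum of the moduli of its
complex eigenvalues (elements of its spectrum). -/
noncomputable def matSpecRad {N : ℕ} (A : Matrix (Fin N) (Fin N) ℂ) : ℝ :=
  sSup ((fun w : ℂ => ‖w‖) '' spectrum ℂ A)


/-!
Kingman's argument. Entrywise, `A (t x + r y)` is the weighted geometric mean of `A x` and
`A y`. Hölder's inequality makes such a bound `W ≤ U ^ t * V ^ r` (entrywise, nonnegative
matrices) survive matrix multiplication, hence pass to all powers and then to the row-sum norm:
`‖W ^ k‖ ≤ ‖U ^ k‖ ^ t * ‖V ^ k‖ ^ r`. Taking `k`-th roots, Gelfand's formula gives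
`ρ W ≤ ρ U ^ t * ρ V ^ r`, so `z ↦ ρ (A z)` is log-convex, and weighted AM-GM turns this into
convexity.
-/

open Finset Filter Topology
open scoped NNReal ENNReal Matrix.Norms.Operator

lemma Real.sum_rpow_mul_rpow_le {ι : Type*} (s : Finset ι) {u v : ι → ℝ}
    (hu : ∀ i ∈ s, 0 ≤ u i) (hv : ∀ i ∈ s, 0 ≤ v i) {t r : ℝ} (ht : 0 < t) (hr : 0 < r)
    (htr : t + r = 1) :
    ∑ i ∈ s, u i ^ t * v i ^ r ≤ (∑ i ∈ s, u i) ^ t * (∑ i ∈ s, v i) ^ r := by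
  have hpq : Real.HolderConjugate t⁻¹ r⁻¹ := ⟨by simpa using htr, by positivity, by positivity⟩
  have hpow {w : ι → ℝ} {p : ℝ} (hp : p ≠ 0) (hw : ∀ i ∈ s, 0 ≤ w i) :
      ∑ i ∈ s, (w i ^ p) ^ p⁻¹ = ∑ i ∈ s, w i :=
    sum_congr rfl fun i hi => Real.rpow_rpow_inv (hw i hi) hp
  simpa [hpow ht.ne' hu, hpow hr.ne' hv] using
    Real.inner_le_Lp_mul_Lq_of_nonneg s hpq (fun i hi => Real.rpow_nonneg (hu i hi) t)
      (fun i hi => Real.rpow_nonneg (hv i hi) r)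

lemma Real.mul_rpow_add_eq_rpow_mul_rpow {c g : ℝ} (hc : 0 ≤ c) (hg : 0 < g) (x y : ℝ)
    {t r : ℝ} (htr : t + r = 1) :
    c * g ^ (t * x + r * y) = (c * g ^ x) ^ t * (c * g ^ y) ^ r := by
  rw [Real.mul_rpow hc (Real.rpow_nonneg hg.le x), Real.mul_rpow hc (Real.rpow_nonneg hg.le y),
    ← Real.rpow_mul hg.le, ← Real.rpow_mul hg.le, mul_mul_mul_comm,
    ← Real.rpow_add' hc (by simp [htr]), htr, Real.rpow_one, ← Real.rpow_add hg,
    mul_comm x, mul_comm y]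

namespace Matrix

section

variable {l m n : Type*} [Fintype m] {t r : ℝ}

lemma mul_apply_le_rpow_mul_rpow {W₁ U₁ V₁ : Matrix l m ℝ} {W₂ U₂ V₂ : Matrix m n ℝ}
    (hW₁ : ∀ i j, 0 ≤ W₁ i j) (hU₁ : ∀ i j, 0 ≤ U₁ i j) (hV₁ : ∀ i j, 0 ≤ V₁ i j)
    (hW₂ : ∀ i j, 0 ≤ W₂ i j) (hU₂ : ∀ i j, 0 ≤ U₂ i j) (hV₂ : ∀ i j, 0 ≤ V₂ i j)
    (ht : 0 < t) (hr : 0 < r) (htr : t + r = 1)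
    (h₁ : ∀ i j, W₁ i j ≤ U₁ i j ^ t * V₁ i j ^ r) (h₂ : ∀ i j, W₂ i j ≤ U₂ i j ^ t * V₂ i j ^ r)
    (i : l) (j : n) :
    (W₁ * W₂) i j ≤ (U₁ * U₂) i j ^ t * (V₁ * V₂) i j ^ r := by
  simp only [mul_apply]
  calc ∑ k, W₁ i k * W₂ k j
      ≤ ∑ k, (U₁ i k * U₂ k j) ^ t * (V₁ i k * V₂ k j) ^ r := by
        refine sum_le_sum fun k _ => ?_
        rw [Real.mul_rpow (hU₁ i k) (hU₂ k j), Real.mul_rpow (hV₁ i k) (hV₂ k j),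
          mul_mul_mul_comm]
        exact mul_le_mul (h₁ i k) (h₂ k j) (hW₂ k j) ((hW₁ i k).trans (h₁ i k))
    _ ≤ (∑ k, U₁ i k * U₂ k j) ^ t * (∑ k, V₁ i k * V₂ k j) ^ r :=
        Real.sum_rpow_mul_rpow_le _ (fun k _ => mul_nonneg (hU₁ i k) (hU₂ k j))
          (fun k _ => mul_nonneg (hV₁ i k) (hV₂ k j)) ht hr htr

lemma pow_apply_le_rpow_mul_rpow [DecidableEq m] {W U V : Matrix m m ℝ}
    (hW : ∀ i j, 0 ≤ W i j) (hU : ∀ i j, 0 ≤ U i j) (hV : ∀ i j, 0 ≤ V i j)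
    (ht : 0 < t) (hr : 0 < r) (htr : t + r = 1) (h : ∀ i j, W i j ≤ U i j ^ t * V i j ^ r)
    (k : ℕ) (i j : m) :
    (W ^ k) i j ≤ (U ^ k) i j ^ t * (V ^ k) i j ^ r := by
  induction k generalizing i j with
  | zero =>
    by_cases hij : i = j <;> simp [hij, Real.zero_rpow ht.ne']
  | succ k ih =>
    simp only [pow_succ]
    exact mul_apply_le_rpow_mul_rpow (pow_apply_nonneg hW k) (pow_apply_nonneg hU k)
      (pow_apply_nonneg hV k) hW hU hV ht hr htr ih h i j

end

section

variable {m n α β : Type*} [Fintype m] [Fintype n]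

lemma linfty_opNorm_le_iff [SeminormedAddCommGroup α] {A : Matrix m n α} {C : ℝ} (hC : 0 ≤ C) :
    ‖A‖ ≤ C ↔ ∀ i, ∑ j, ‖A i j‖ ≤ C := by
  lift C to ℝ≥0 using hC
  rw [linfty_opNorm_def, NNReal.coe_le_coe, Finset.sup_le_iff]
  simp [← NNReal.coe_le_coe]

lemma sum_norm_le_linfty_opNorm [SeminormedAddCommGroup α] (A : Matrix m n α) (i : m) :
    ∑ j, ‖A i j‖ ≤ ‖A‖ :=
  (linfty_opNorm_le_iff (norm_nonneg A)).1 le_rfl i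

lemma linfty_opNorm_map_eq [SeminormedAddCommGroup α] [SeminormedAddCommGroup β]
    (A : Matrix m n α) (f : α → β) (hf : ∀ a, ‖f a‖ = ‖a‖) : ‖A.map f‖ = ‖A‖ := by
  simp only [linfty_opNorm_def, map_apply]
  congr! with i - j -
  exact NNReal.eq (hf _)

lemma linfty_opNorm_le_rpow_mul_rpow {t r : ℝ} {W U V : Matrix m n ℝ}
    (hW : ∀ i j, 0 ≤ W i j) (hU : ∀ i j, 0 ≤ U i j) (hV : ∀ i j, 0 ≤ V i j)
    (ht : 0 < t) (hr : 0 < r) (htr : t + r = 1) (h : ∀ i j, W i j ≤ U i j ^ t * V i j ^ r) :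
    ‖W‖ ≤ ‖U‖ ^ t * ‖V‖ ^ r := by
  refine (linfty_opNorm_le_iff (by positivity)).2 fun i => ?_
  have hrow {A : Matrix m n ℝ} (hA : ∀ i j, 0 ≤ A i j) : ∑ j, ‖A i j‖ = ∑ j, A i j :=
    sum_congr rfl fun j _ => Real.norm_of_nonneg (hA i j)
  calc ∑ j, ‖W i j‖ = ∑ j, W i j := hrow hW
    _ ≤ ∑ j, U i j ^ t * V i j ^ r := sum_le_sum fun j _ => h i j
    _ ≤ (∑ j, U i j) ^ t * (∑ j, V i j) ^ r :=
      Real.sum_rpow_mul_rpow_le _ (fun j _ => hU i j) (fun j _ => hV i j) ht hr htr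
    _ ≤ ‖U‖ ^ t * ‖V‖ ^ r := by
      rw [← hrow hU, ← hrow hV]
      gcongr <;> exact sum_norm_le_linfty_opNorm _ i

end

end Matrix

lemma matSpecRad_nonneg {N : ℕ} (M : Matrix (Fin N) (Fin N) ℂ) : 0 ≤ matSpecRad M :=
  Real.sSup_nonneg <| by rintro _ ⟨w, -, rfl⟩; exact norm_nonneg w

lemma ofReal_matSpecRad {N : ℕ} (M : Matrix (Fin N) (Fin N) ℂ) :
    ENNReal.ofReal (matSpecRad M) = spectralRadius ℂ M := by
  rcases (spectrum ℂ M).eq_empty_or_nonempty with hσ | hσ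
  · -- only for `N = 0`, where `sSup ∅ = 0` matches the empty supremum in `ℝ≥0∞`
    simp [matSpecRad, spectralRadius, hσ]
  obtain ⟨z, hz, hz_eq⟩ := spectrum.exists_nnnorm_eq_spectralRadius_of_nonempty hσ
  have hmax : matSpecRad M = ‖z‖ := by
    refine IsGreatest.csSup_eq ⟨Set.mem_image_of_mem _ hz, ?_⟩
    rintro _ ⟨w, hw, rfl⟩
    exact_mod_cast (le_iSup₂ (f := fun k (_ : k ∈ spectrum ℂ M) => (‖k‖₊ : ℝ≥0∞)) w hw).trans_eq
      hz_eq.symm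
  rw [← hz_eq, hmax, ← coe_nnnorm, ENNReal.ofReal_coe_nnreal]

lemma tendsto_norm_pow_rpow_matSpecRad {N : ℕ} (M : Matrix (Fin N) (Fin N) ℂ) :
    Tendsto (fun k : ℕ => ‖M ^ k‖ ^ (1 / k : ℝ)) atTop (𝓝 (matSpecRad M)) := by
  have : CompleteSpace (Matrix (Fin N) (Fin N) ℂ) := FiniteDimensional.complete ℂ _
  have hgelfand := spectrum.pow_norm_pow_one_div_tendsto_nhds_spectralRadius M
  rw [← ofReal_matSpecRad] at hgelfand
  have h := (ENNReal.tendsto_toReal ENNReal.ofReal_ne_top).comp hgelfand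
  rw [ENNReal.toReal_ofReal (matSpecRad_nonneg M)] at h
  exact h.congr fun k => ENNReal.toReal_ofReal (by positivity)

lemma matSpecRad_map_le_rpow_mul_rpow {N : ℕ} {W U V : Matrix (Fin N) (Fin N) ℝ}
    (hW : ∀ i j, 0 ≤ W i j) (hU : ∀ i j, 0 ≤ U i j) (hV : ∀ i j, 0 ≤ V i j)
    {t r : ℝ} (ht : 0 < t) (hr : 0 < r) (htr : t + r = 1)
    (h : ∀ i j, W i j ≤ U i j ^ t * V i j ^ r) :
    matSpecRad (W.map ((↑) : ℝ → ℂ)) ≤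
      matSpecRad (U.map ((↑) : ℝ → ℂ)) ^ t * matSpecRad (V.map ((↑) : ℝ → ℂ)) ^ r := by
  have hnorm (P : Matrix (Fin N) (Fin N) ℝ) (k : ℕ) : ‖P.map ((↑) : ℝ → ℂ) ^ k‖ = ‖P ^ k‖ := by
    rw [← Matrix.linfty_opNorm_map_eq _ _ Complex.norm_real]
    exact congrArg norm (Matrix.map_pow P Complex.ofRealHom k).symm
  have hk (k : ℕ) : ‖W ^ k‖ ^ (1 / k : ℝ) ≤
      (‖U ^ k‖ ^ (1 / k : ℝ)) ^ t * (‖V ^ k‖ ^ (1 / k : ℝ)) ^ r :=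
    calc ‖W ^ k‖ ^ (1 / k : ℝ) ≤ (‖U ^ k‖ ^ t * ‖V ^ k‖ ^ r) ^ (1 / k : ℝ) := by
          gcongr
          exact Matrix.linfty_opNorm_le_rpow_mul_rpow (Matrix.pow_apply_nonneg hW k)
            (Matrix.pow_apply_nonneg hU k) (Matrix.pow_apply_nonneg hV k) ht hr htr
            (Matrix.pow_apply_le_rpow_mul_rpow hW hU hV ht hr htr h k)
      _ = _ := by
          rw [Real.mul_rpow (by positivity) (by positivity), ← Real.rpow_mul (norm_nonneg _),
            ← Real.rpow_mul (norm_nonneg _), ← Real.rpow_mul (norm_nonneg _),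
            ← Real.rpow_mul (norm_nonneg _), mul_comm t, mul_comm r]
  simp only [← hnorm] at hk
  exact le_of_tendsto_of_tendsto' (tendsto_norm_pow_rpow_matSpecRad _)
    (((tendsto_norm_pow_rpow_matSpecRad _).rpow_const (Or.inr ht.le)).mul
      ((tendsto_norm_pow_rpow_matSpecRad _).rpow_const (Or.inr hr.le))) hk

theorem stmt9_general (N : ℕ)
    (c g : Fin N → Fin N → ℝ)
    (hc : ∀ i j, 0 ≤ c i j) (hg : ∀ i j, 0 < g i j)
    (A : ℝ → Matrix (Fin N) (Fin N) ℝ)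
    (hA : ∀ z i j, A z i j = c i j * g i j ^ z) :
    ConvexOn ℝ Set.univ (fun z => matSpecRad ((A z).map fun x => (x : ℂ))) := by
  have hA_nonneg (z : ℝ) (i j : Fin N) : 0 ≤ A z i j := by
    rw [hA]; exact mul_nonneg (hc i j) (Real.rpow_nonneg (hg i j).le z)
  refine convexOn_iff_forall_pos.2 ⟨convex_univ, fun x _ y _ t r ht hr htr => ?_⟩
  have hA_comb (i j : Fin N) : A (t * x + r * y) i j = A x i j ^ t * A y i j ^ r := by
    simp only [hA, Real.mul_rpow_add_eq_rpow_mul_rpow (hc i j) (hg i j) x y htr]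
  have hlog := matSpecRad_map_le_rpow_mul_rpow (hA_nonneg _) (hA_nonneg x) (hA_nonneg y)
    ht hr htr fun i j => (hA_comb i j).le
  exact hlog.trans <| Real.geom_mean_le_arith_mean2_weighted ht.le hr.le (matSpecRad_nonneg _)
    (matSpecRad_nonneg _) htr

/-- Proposition 1 of Beare–Toda 2022: for `c_ij ≥ 0` and `g_ij > 0`, the
spectral radius of the matrix `A(z) = (c_ij g_ij^z)` is a convex function of real `z`. -/
theorem stmt9 (N : ℕ) (hN : 1 ≤ N)
    (c g : Fin N → Fin N → ℝ)
    (hc : ∀ i j, 0 ≤ c i j) (hg : ∀ i j, 0 < g i j)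
    (A : ℝ → Matrix (Fin N) (Fin N) ℝ)
    (hA : ∀ z i j, A z i j = c i j * g i j ^ z) :
    ConvexOn ℝ Set.univ (fun z => matSpecRad ((A z).map fun x => (x : ℂ))) :=
  stmt9_general N c g hc hg A hA
end
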